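/- arXiv:1902.01688 — 2 statements merged into one kernel-verified Lean document; each statement's English description precedes it below -/
import Mathlib

section
/- Let k > 0 and let T be a linear operator that maps each function holomorphic on some neighborhood of the segment I = [-1,1] ⊂ ℂ to a function holomorphic on some neighborhood of I, and which satisfies the A(k) property. Then for every k-sequence (f_n)_{n≥1} (with parameter B not exceeding the k-threshold τ of T), the sequence (T f_n)_{n≥1} is again a k-sequence; in particular the series Σ_{n≥1} (T f_n)|_{[-1,1]} converges uniformly on [-1,1] and its sum belongs to the Gevrey class G_k([-1,1]). -/
open Metric Set Filter

noncomputable section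

/-- The segment `[-1,1]` viewed inside `ℂ`. -/
def seg : Set ℂ := (fun x : ℝ => (x : ℂ)) '' Set.Icc (-1) 1

/-- The neighborhood `[-1,1]_r` of the segment. -/
def nbd (r : ℝ) : Set ℂ := {z : ℂ | Metric.infDist z seg < r}

/-- The set `[-1,1]_{k,A,n}`. -/
def tube (k A : ℝ) (n : ℕ) : Set ℂ :=
  {z : ℂ | Metric.infDist z seg < A * (n : ℝ) ^ (-(1 : ℝ) / k)}

/-- Sup norm of `f` on `S`. -/
def supOn (f : ℂ → ℂ) (S : Set ℂ) : ℝ := sSup ((fun z => ‖f z‖) '' S)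

/-- The Gevrey class `G_k([-1,1])`. -/
def GevreyClass (k : ℝ) (f : ℝ → ℂ) : Prop :=
  ContDiffOn ℝ (⊤ : ℕ∞) f (Set.Icc (-1) 1) ∧
  ∃ C > 0, ∃ A > 0, ∀ n : ℕ, ∀ x ∈ Set.Icc (-1 : ℝ) 1,
    ‖iteratedDerivWithin n f (Set.Icc (-1 : ℝ) 1) x‖ ≤
      C * A ^ n * (n : ℝ) ^ ((n : ℝ) * (1 + 1 / k))

/-- `(f_n)_{n ≥ 1}` is a `k`-sequence. -/
def IsKSeq (k : ℝ) (f : ℕ → ℂ → ℂ) : Prop :=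
  ∃ B > 0, ∃ C > 0, ∃ θ ∈ Set.Ioo (0 : ℝ) 1, ∀ n : ℕ, 1 ≤ n →
    DifferentiableOn ℂ (f n) (tube k B n) ∧ ∀ z ∈ tube k B n, ‖f n z‖ ≤ C * θ ^ n

/-- The `E(k)` property with threshold `τ` for a sequence of functions on `[-1,1]_σ`. -/
def EPropWith (k σ : ℝ) (φ : ℕ → ℂ → ℂ) (τ : ℝ) : Prop :=
  0 < τ ∧ τ ≤ σ ∧ ∀ A : ℝ, 0 < A → A ≤ τ → ∃ M : ℕ, ∀ n : ℕ, M ≤ n → ∀ p : ℕ,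
    ∀ z ∈ tube k A (n + 1), φ p z ∈ tube k A n

/-- The `E(k)` property. -/
def EProp (k σ : ℝ) (φ : ℕ → ℂ → ℂ) : Prop := ∃ τ : ℝ, EPropWith k σ φ τ

/-- `T` is a linear operator on functions. -/
def IsLinOp (T : (ℂ → ℂ) → ℂ → ℂ) : Prop :=
  (∀ f g : ℂ → ℂ, T (f + g) = T f + T g) ∧ ∀ (c : ℂ) (f : ℂ → ℂ), T (c • f) = c • T f

/-- The quantitative part of the `A(k)` property, for a given `A` and integer `N = N(A)`. -/
def APropAt (k : ℝ) (T : (ℂ → ℂ) → ℂ → ℂ) (ρ A : ℝ) (N : ℕ) : Prop :=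
  ∀ n : ℕ, N ≤ n → ∀ f : ℂ → ℂ, DifferentiableOn ℂ f (tube k A n) →
    BddAbove ((fun z => ‖f z‖) '' tube k A n) →
    DifferentiableOn ℂ (T f) (tube k A (n + 1)) ∧
      ∀ z ∈ tube k A (n + 1), ‖T f z‖ ≤ ρ * supOn f (tube k A n)

/-- The `A(k)` property with `k`-threshold `τ` and contraction constant `ρ`. -/
def AProp (k : ℝ) (T : (ℂ → ℂ) → ℂ → ℂ) (τ ρ : ℝ) : Prop :=
  0 < τ ∧ ρ ∈ Set.Ioo (0 : ℝ) 1 ∧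
  (∀ A : ℝ, 0 < A → A ≤ τ → ∃ N : ℕ, APropAt k T ρ A N) ∧
  (∀ f : ℂ → ℂ, (∃ r > 0, DifferentiableOn ℂ f (nbd r)) →
      ∀ z ∈ seg, ‖T f z‖ ≤ ρ * supOn f seg)

/-!
Applying the `A(k)` estimate at level `n + N(B)` and absorbing the shrinking of the tubes into the
smaller width `B (N + 2)^{-1/k}` turns the bound `C θ^n` on `f n` into `ρ C θ^n` on `T (f n)`.
For any `k`-sequence `g`, Cauchy's estimate on the disc of radius `B n^{-1/k} / 2` around a point of
`[-1,1]` bounds the `p`-th derivative of `g n` there by `p! C (2/B)^p n^{p/k} θ^n`. Since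
`n^q s^n ≤ (q / |log s|)^q` for `s = √θ`, this is a geometric term `s^n` times a constant which,
by `p! ≤ p^p`, is of Gevrey order `p^{p(1 + 1/k)}`; so every differentiated series converges
uniformly on `[-1,1]` and may be differentiated termwise.
-/

section SmoothSeries

variable {E : Type*} [NormedAddCommGroup E] [NormedSpace ℝ E]
  {s : Set ℝ} {f f' : ℕ → ℝ → E} {u : ℕ → ℝ}

theorem norm_tsum_sub_tsum_le_of_hasDerivWithinAt (hs : Convex ℝ s) (hu : Summable u)
    (hf : ∀ n, ∀ y ∈ s, HasDerivWithinAt (f n) (f' n y) s y)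
    (hf' : ∀ n, ∀ y ∈ s, ‖f' n y‖ ≤ u n) (hf0 : ∀ y ∈ s, Summable fun n => f n y)
    {x y : ℝ} (hx : x ∈ s) (hy : y ∈ s) :
    ‖∑' n, f n y - ∑' n, f n x‖ ≤ (∑' n, u n) * ‖y - x‖ := by
  rw [← (hf0 y hy).tsum_sub (hf0 x hx), ← tsum_mul_right]
  exact tsum_of_norm_bounded (hu.mul_right _).hasSum fun n =>
    hs.norm_image_sub_le_of_norm_hasDerivWithin_le (hf n) (hf' n) hx hy

theorem hasDerivWithinAt_tsum_of_convex [CompleteSpace E] (hs : Convex ℝ s) (hu : Summable u)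
    (hf : ∀ n, ∀ y ∈ s, HasDerivWithinAt (f n) (f' n y) s y)
    (hf' : ∀ n, ∀ y ∈ s, ‖f' n y‖ ≤ u n) (hf0 : ∀ y ∈ s, Summable fun n => f n y)
    {x : ℝ} (hx : x ∈ s) :
    HasDerivWithinAt (fun y => ∑' n, f n y) (∑' n, f' n x) s x := by
  rw [hasDerivWithinAt_iff_isLittleO, Asymptotics.isLittleO_iff]
  intro ε hε
  obtain ⟨N, hN⟩ : ∃ N, ∑' n, u (n + N) ≤ ε / 3 :=
    ((tendsto_sum_nat_add u).eventually (ge_mem_nhds (by positivity))).exists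
  have huN : Summable fun n => u (n + N) := (summable_nat_add_iff N).2 hu
  -- Split off the first `N` terms; the tail is `ε / 3`-Lipschitz and its derivative is `≤ ε / 3`.
  have hsplit : ∀ y ∈ s, ∑' n, f n y = ∑ n ∈ Finset.range N, f n y + ∑' n, f (n + N) y :=
    fun y hy => ((hf0 y hy).sum_add_tsum_nat_add N).symm
  have hsplit' : ∑' n, f' n x = ∑ n ∈ Finset.range N, f' n x + ∑' n, f' (n + N) x :=
    ((Summable.of_norm_bounded hu fun n => hf' n x hx).sum_add_tsum_nat_add N).symm
  have htail : ∀ y ∈ s, ‖∑' n, f (n + N) y - ∑' n, f (n + N) x‖ ≤ ε / 3 * ‖y - x‖ :=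
    fun y hy => (norm_tsum_sub_tsum_le_of_hasDerivWithinAt hs huN (fun n => hf (n + N))
      (fun n => hf' (n + N)) (fun y hy => (summable_nat_add_iff N).2 (hf0 y hy)) hx hy).trans
      (by gcongr)
  have htail' : ‖∑' n, f' (n + N) x‖ ≤ ε / 3 :=
    (tsum_of_norm_bounded huN.hasSum fun n => hf' (n + N) x hx).trans hN
  have hhead : HasDerivWithinAt (fun y => ∑ n ∈ Finset.range N, f n y)
      (∑ n ∈ Finset.range N, f' n x) s x :=
    HasDerivWithinAt.fun_sum fun n _ => hf n x hx
  filter_upwards [(hasDerivWithinAt_iff_isLittleO.1 hhead).def (by positivity : 0 < ε / 3),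
    self_mem_nhdsWithin] with y hhy hy
  rw [hsplit y hy, hsplit x hx, hsplit']
  calc _ = ‖(∑ n ∈ Finset.range N, f n y - ∑ n ∈ Finset.range N, f n x
          - (y - x) • ∑ n ∈ Finset.range N, f' n x)
          + (∑' n, f (n + N) y - ∑' n, f (n + N) x) - (y - x) • ∑' n, f' (n + N) x‖ := by
        rw [smul_add]; congr 1; abel
    _ ≤ ε / 3 * ‖y - x‖ + ε / 3 * ‖y - x‖ + ‖y - x‖ * (ε / 3) := by
        refine norm_sub_le_of_le (norm_add_le_of_le hhy (htail y hy)) ?_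
        rw [norm_smul]
        gcongr
    _ = ε * ‖y - x‖ := by ring

end SmoothSeries

section IteratedDerivWithin

variable {𝕜 F : Type*} [NontriviallyNormedField 𝕜] [NormedAddCommGroup F] [NormedSpace 𝕜 F]
  {s : Set 𝕜} {G : ℕ → 𝕜 → F}

theorem contDiffOn_of_hasDerivWithinAt_succ (hs : UniqueDiffOn 𝕜 s)
    (hG : ∀ p, ∀ x ∈ s, HasDerivWithinAt (G p) (G (p + 1) x) s x) (m p : ℕ) :
    ContDiffOn 𝕜 m (G p) s := by
  induction m generalizing p with
  | zero => exact contDiffOn_zero.2 fun x hx => (hG p x hx).continuousWithinAt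
  | succ m ih =>
    rw [Nat.cast_succ, contDiffOn_succ_iff_derivWithin hs]
    exact ⟨fun x hx => (hG p x hx).differentiableWithinAt, by simp,
      (ih (p + 1)).congr fun x hx => (hG p x hx).derivWithin (hs x hx)⟩

theorem iteratedDerivWithin_eq_of_hasDerivWithinAt_succ (hs : UniqueDiffOn 𝕜 s)
    (hG : ∀ p, ∀ x ∈ s, HasDerivWithinAt (G p) (G (p + 1) x) s x) (p : ℕ) :
    ∀ x ∈ s, iteratedDerivWithin p (G 0) s x = G p x := by
  induction p with
  | zero => intro x _; simp
  | succ p ih =>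
    intro x hx
    rw [iteratedDerivWithin_succ, derivWithin_congr ih (ih x hx)]
    exact (hG p x hx).derivWithin (hs x hx)

end IteratedDerivWithin

theorem Real.rpow_le_rpow_self_mul_exp {y q : ℝ} (hy : 0 ≤ y) (hq : 0 ≤ q) :
    y ^ q ≤ q ^ q * Real.exp y := by
  rcases hq.eq_or_lt with rfl | hq
  · simpa using Real.one_le_exp hy
  have hyq : y ≤ q * Real.exp (y / q) := by
    calc y = q * (y / q) := by field_simp
      _ ≤ q * Real.exp (y / q) := by
          gcongr; linarith [Real.add_one_le_exp (y / q)]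
  calc y ^ q ≤ (q * Real.exp (y / q)) ^ q := Real.rpow_le_rpow hy hyq hq.le
    _ = q ^ q * Real.exp y := by
        rw [Real.mul_rpow hq.le (Real.exp_pos _).le, ← Real.exp_mul, div_mul_cancel₀ _ hq.ne']

theorem natCast_rpow_mul_pow_le {s q : ℝ} (hs0 : 0 < s) (hs1 : s < 1) (hq : 0 ≤ q) (n : ℕ) :
    (n : ℝ) ^ q * s ^ n ≤ (q / -Real.log s) ^ q := by
  set c := -Real.log s
  have hc : 0 < c := neg_pos.2 (Real.log_neg hs0 hs1)
  have hsn : s ^ n = Real.exp (-(c * n)) := by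
    rw [← Real.exp_log hs0, ← Real.exp_nat_mul]
    congr 1
    ring
  have hcn := Real.rpow_le_rpow_self_mul_exp (by positivity : 0 ≤ c * n) hq
  rw [Real.mul_rpow hc.le n.cast_nonneg] at hcn
  rw [hsn, Real.div_rpow hq hc.le, le_div_iff₀ (by positivity)]
  calc (n : ℝ) ^ q * Real.exp (-(c * n)) * c ^ q
      = c ^ q * (n : ℝ) ^ q * Real.exp (-(c * n)) := by ring
    _ ≤ q ^ q * Real.exp (c * n) * Real.exp (-(c * n)) := by gcongr
    _ = q ^ q := by rw [mul_assoc, ← Real.exp_add, add_neg_cancel, Real.exp_zero, mul_one]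

theorem factorial_mul_rpow_le {k c a M : ℝ} (hk : 0 < k) (hc : 0 < c) (ha : 0 ≤ a)
    (hM : 0 ≤ M) (p : ℕ) :
    p.factorial * M * a ^ p * ((p / k) / c) ^ ((p : ℝ) / k)
      ≤ M * (a * ((k * c)⁻¹) ^ (1 / k)) ^ p * (p : ℝ) ^ ((p : ℝ) * (1 + 1 / k)) := by
  have hsplit : ((p / k) / c) ^ ((p : ℝ) / k)
      = (((k * c)⁻¹) ^ (1 / k)) ^ p * (p : ℝ) ^ ((p : ℝ) / k) := by
    rw [div_div, div_eq_mul_inv, Real.mul_rpow (by positivity) (by positivity), mul_comm,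
      ← Real.rpow_natCast, ← Real.rpow_mul (by positivity), one_div_mul_eq_div]
  have hpow : (p : ℝ) ^ ((p : ℝ) * (1 + 1 / k)) = (p : ℝ) ^ p * (p : ℝ) ^ ((p : ℝ) / k) := by
    rw [mul_one_add, ← Real.rpow_natCast, ← Real.rpow_add_of_nonneg (by positivity)
      (by positivity) (by positivity), mul_one_div]
  have hfact : (p.factorial : ℝ) ≤ (p : ℝ) ^ p := by exact_mod_cast p.factorial_le_pow
  rw [hsplit, hpow, mul_pow]
  have := Real.rpow_nonneg (p.cast_nonneg : (0 : ℝ) ≤ p) ((p : ℝ) / k)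
  set R := M * a ^ p * (((k * c)⁻¹) ^ (1 / k)) ^ p * (p : ℝ) ^ ((p : ℝ) / k)
  calc _ = (p.factorial : ℝ) * R := by ring
    _ ≤ (p : ℝ) ^ p * R := by gcongr
    _ = _ := by ring

theorem norm_iteratedDeriv_le_of_ball {g : ℂ → ℂ} {x : ℂ} {r M : ℝ} (hr : 0 < r)
    (hg : DifferentiableOn ℂ g (ball x r)) (hM : ∀ z ∈ ball x r, ‖g z‖ ≤ M) (p : ℕ) :
    ‖iteratedDeriv p g x‖ ≤ p.factorial * M * (2 / r) ^ p := by
  have hsub : closedBall x (r / 2) ⊆ ball x r := closedBall_subset_ball (half_lt_self hr)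
  have hcl : DiffContOnCl ℂ g (ball x (r / 2)) :=
    (hg.mono ((closure_ball x (half_pos hr).ne').subset.trans hsub)).diffContOnCl
  have h := Complex.norm_iteratedDeriv_le_of_forall_mem_sphere_norm_le p (half_pos hr) hcl
    fun z hz => hM z (hsub (sphere_subset_closedBall hz))
  rwa [div_eq_mul_inv _ ((r / 2) ^ p), ← inv_pow, inv_div] at h

theorem hasDerivAt_iteratedDeriv_ofReal {g : ℂ → ℂ} {U : Set ℂ} (hU : IsOpen U)
    (hg : DifferentiableOn ℂ g U) {x : ℝ} (hx : (x : ℂ) ∈ U) (p : ℕ) :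
    HasDerivAt (fun y : ℝ => iteratedDeriv p g y) (iteratedDeriv (p + 1) g x) x := by
  have hd := ((hg.analyticOnNhd hU).iterated_deriv p x hx).differentiableAt
  rw [← iteratedDeriv_eq_iterate] at hd
  rw [iteratedDeriv_succ]
  exact hd.hasDerivAt.comp_ofReal

theorem isOpen_tube (k A : ℝ) (n : ℕ) : IsOpen (tube k A n) :=
  isOpen_lt (continuous_infDist_pt seg) continuous_const

theorem ball_subset_tube {k A : ℝ} {n : ℕ} {x : ℂ} (hx : x ∈ seg) :
    ball x (A * (n : ℝ) ^ (-(1 : ℝ) / k)) ⊆ tube k A n := fun _ hz =>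
  (infDist_le_dist_of_mem hx).trans_lt hz

theorem tube_rpow_subset_tube {k A c : ℝ} (hk : 0 ≤ k) (hA : 0 ≤ A) (hc : 0 ≤ c) {m n : ℕ}
    (hm : 1 ≤ m) (hmn : (m : ℝ) ≤ c * n) :
    tube k (A * c ^ (-(1 : ℝ) / k)) n ⊆ tube k A m := by
  intro z (hz : infDist z seg < _)
  refine hz.trans_le ?_
  rw [mul_assoc, ← Real.mul_rpow hc n.cast_nonneg]
  exact mul_le_mul_of_nonneg_left (Real.rpow_le_rpow_of_nonpos (by exact_mod_cast hm) hmn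
    (div_nonpos_of_nonpos_of_nonneg (by norm_num) hk)) hA

theorem tube_subset_tube_of_le {k A : ℝ} (hk : 0 ≤ k) (hA : 0 ≤ A) {m n : ℕ} (hm : 1 ≤ m)
    (hmn : m ≤ n) : tube k A n ⊆ tube k A m := by
  simpa using tube_rpow_subset_tube hk hA zero_le_one hm (by simpa using hmn)

theorem APropAt.image_bound {k ρ B C θ : ℝ} {T : (ℂ → ℂ) → ℂ → ℂ} {N : ℕ} {f : ℕ → ℂ → ℂ}
    (hT : APropAt k T ρ B N)
    (hk : 0 ≤ k) (hB : 0 ≤ B) (hρ : 0 ≤ ρ) (hC : 0 ≤ C) (hθ : 0 ≤ θ)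
    (hf : ∀ n : ℕ, 1 ≤ n → DifferentiableOn ℂ (f n) (tube k B n) ∧
      ∀ z ∈ tube k B n, ‖f n z‖ ≤ C * θ ^ n) (n : ℕ) (hn : 1 ≤ n) :
    DifferentiableOn ℂ (T (f n)) (tube k (B * ((N : ℝ) + 2) ^ (-(1 : ℝ) / k)) n) ∧
      ∀ z ∈ tube k (B * ((N : ℝ) + 2) ^ (-(1 : ℝ) / k)) n, ‖T (f n) z‖ ≤ ρ * C * θ ^ n := by
  obtain ⟨hfd, hfb⟩ := hf n hn
  have hsub : tube k B (n + N) ⊆ tube k B n :=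
    tube_subset_tube_of_le hk hB hn (Nat.le_add_right n N)
  have hbdd : ∀ y ∈ (fun z => ‖f n z‖) '' tube k B (n + N), y ≤ C * θ ^ n := by
    rintro _ ⟨z, hz, rfl⟩
    exact hfb z (hsub hz)
  obtain ⟨hTd, hTb⟩ := hT (n + N) (Nat.le_add_left N n) (f n) (hfd.mono hsub) ⟨_, hbdd⟩
  have hsup : supOn (f n) (tube k B (n + N)) ≤ C * θ ^ n := Real.sSup_le hbdd (by positivity)
  have hshrink : tube k (B * ((N : ℝ) + 2) ^ (-(1 : ℝ) / k)) n ⊆ tube k B (n + N + 1) :=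
    tube_rpow_subset_tube hk hB (by positivity) (by omega) (by
      have : (1 : ℝ) ≤ n := by exact_mod_cast hn
      push_cast; nlinarith)
  refine ⟨hTd.mono hshrink, fun z hz => ?_⟩
  calc ‖T (f n) z‖ ≤ ρ * supOn (f n) (tube k B (n + N)) := hTb z (hshrink hz)
    _ ≤ ρ * C * θ ^ n := by rw [mul_assoc]; gcongr

theorem norm_iteratedDeriv_le_of_tube {k B M : ℝ} (hB : 0 < B) {n : ℕ} (hn : 1 ≤ n)
    {g : ℂ → ℂ} (hg : DifferentiableOn ℂ g (tube k B n)) (hM : ∀ z ∈ tube k B n, ‖g z‖ ≤ M)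
    {x : ℂ} (hx : x ∈ seg) (p : ℕ) :
    ‖iteratedDeriv p g x‖ ≤ p.factorial * M * (2 / B) ^ p * (n : ℝ) ^ ((p : ℝ) / k) := by
  have hn0 : (0 : ℝ) < n := by exact_mod_cast hn
  have hradius : 2 / (B * (n : ℝ) ^ (-(1 : ℝ) / k)) = 2 / B * (n : ℝ) ^ (1 / k) := by
    rw [neg_div, Real.rpow_neg hn0.le]
    field_simp
  have h := norm_iteratedDeriv_le_of_ball (by positivity) (hg.mono (ball_subset_tube hx))
    (fun z hz => hM z (ball_subset_tube hx hz)) p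
  rwa [hradius, mul_pow, ← Real.rpow_natCast ((n : ℝ) ^ (1 / k)), ← Real.rpow_mul hn0.le,
    one_div_mul_eq_div, ← mul_assoc] at h

theorem norm_iteratedDeriv_le_sqrt_pow {k B C θ : ℝ} (hk : 0 < k) (hB : 0 < B) (hC : 0 ≤ C)
    (hθ0 : 0 < θ) (hθ1 : θ < 1) {n : ℕ} (hn : 1 ≤ n) {g : ℂ → ℂ}
    (hg : DifferentiableOn ℂ g (tube k B n)) (hM : ∀ z ∈ tube k B n, ‖g z‖ ≤ C * θ ^ n)
    {x : ℂ} (hx : x ∈ seg) (p : ℕ) :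
    ‖iteratedDeriv p g x‖
      ≤ p.factorial * C * (2 / B) ^ p * ((p / k) / -Real.log √θ) ^ ((p : ℝ) / k) * √θ ^ n := by
  have hs1 : √θ < 1 := by simpa using Real.sqrt_lt_sqrt hθ0.le hθ1
  have hgeom := natCast_rpow_mul_pow_le (Real.sqrt_pos.2 hθ0) hs1
    (by positivity : 0 ≤ (p : ℝ) / k) n
  calc ‖iteratedDeriv p g x‖
      ≤ p.factorial * C * (2 / B) ^ p * ((n : ℝ) ^ ((p : ℝ) / k) * √θ ^ n) * √θ ^ n := by
        refine (norm_iteratedDeriv_le_of_tube hB hn hg hM hx p).trans_eq ?_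
        rw [← Real.mul_self_sqrt hθ0.le, mul_pow, Real.sqrt_mul_self (Real.sqrt_nonneg θ)]
        ring
    _ ≤ _ := by gcongr

theorem IsKSeq.exists_tendstoUniformlyOn_gevreyClass {k : ℝ} {g : ℕ → ℂ → ℂ} (hk : 0 < k)
    (hg : IsKSeq k g) :
    ∃ F : ℝ → ℂ,
      TendstoUniformlyOn (fun N (x : ℝ) => ∑ n ∈ Finset.Icc 1 N, g n (x : ℂ))
        F atTop (Icc (-1) 1) ∧ GevreyClass k F := by
  obtain ⟨B, hB, C, hC, θ, ⟨hθ0, hθ1⟩, hg⟩ := hg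
  set s := √θ
  have hs0 : 0 < s := Real.sqrt_pos.2 hθ0
  have hs1 : s < 1 := by simpa using Real.sqrt_lt_sqrt hθ0.le hθ1
  set c := -Real.log s
  have hc : 0 < c := neg_pos.2 (Real.log_neg hs0 hs1)
  set K : ℕ → ℝ := fun p => p.factorial * C * (2 / B) ^ p * ((p / k) / c) ^ ((p : ℝ) / k)
  -- The hypotheses only concern `n ≥ 1` (and `tube k B 0 = ∅`): index the series by `n + 1`.
  set φ : ℕ → ℕ → ℝ → ℂ := fun p n x => iteratedDeriv p (g (n + 1)) x
  have hmem : ∀ n, ∀ x ∈ Icc (-1 : ℝ) 1, (x : ℂ) ∈ tube k B (n + 1) := fun n x hx =>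
    ball_subset_tube ⟨x, hx, rfl⟩ (mem_ball_self (by positivity))
  have hφ : ∀ p n, ∀ x ∈ Icc (-1 : ℝ) 1, ‖φ p n x‖ ≤ K p * s ^ n := fun p n x hx =>
    (norm_iteratedDeriv_le_sqrt_pow hk hB hC.le hθ0 hθ1 n.succ_pos (hg (n + 1) n.succ_pos).1
      (hg (n + 1) n.succ_pos).2 ⟨x, hx, rfl⟩ p).trans
      (by gcongr _ * ?_; exact pow_le_pow_of_le_one hs0.le hs1.le n.le_succ)
  have hderiv : ∀ p n, ∀ x ∈ Icc (-1 : ℝ) 1,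
      HasDerivWithinAt (φ p n) (φ (p + 1) n x) (Icc (-1) 1) x := fun p n x hx =>
    (hasDerivAt_iteratedDeriv_ofReal (isOpen_tube k B (n + 1)) (hg (n + 1) n.succ_pos).1
      (hmem n x hx) p).hasDerivWithinAt
  have hsum : ∀ p, Summable fun n => K p * s ^ n := fun p =>
    (summable_geometric_of_lt_one hs0.le hs1).mul_left _
  set G : ℕ → ℝ → ℂ := fun p x => ∑' n, φ p n x
  have hG : ∀ p, ∀ x ∈ Icc (-1 : ℝ) 1, HasDerivWithinAt (G p) (G (p + 1) x) (Icc (-1) 1) x :=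
    fun p x hx => hasDerivWithinAt_tsum_of_convex (convex_Icc _ _) (hsum (p + 1)) (hderiv p)
      (fun n => hφ (p + 1) n) (fun y hy => (hsum p).of_norm_bounded fun n => hφ p n y hy) hx
  have hu : UniqueDiffOn ℝ (Icc (-1 : ℝ) 1) := uniqueDiffOn_Icc (by norm_num)
  refine ⟨G 0, ?_, contDiffOn_infty.2 fun m => contDiffOn_of_hasDerivWithinAt_succ hu hG m 0,
    C * (1 - s)⁻¹, by have := sub_pos.2 hs1; positivity,
    2 / B * ((k * c)⁻¹) ^ (1 / k), by positivity, fun p x hx => ?_⟩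
  · refine (tendstoUniformlyOn_tsum_nat (hsum 0) fun n x hx => hφ 0 n x hx).congr
      (Eventually.of_forall fun N x _ => ?_)
    show ∑ n ∈ Finset.range N, φ 0 n x = ∑ n ∈ Finset.Icc 1 N, g n x
    rw [← Finset.Ico_add_one_right_eq_Icc, Finset.sum_Ico_eq_sum_range, add_tsub_cancel_right]
    simp only [φ, iteratedDeriv_zero, add_comm 1]
  · rw [iteratedDerivWithin_eq_of_hasDerivWithinAt_succ hu hG p x hx]
    calc ‖G p x‖ ≤ K p * (1 - s)⁻¹ :=
          tsum_of_norm_bounded ((hasSum_geometric_of_lt_one hs0.le hs1).mul_left (K p))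
            fun n => hφ p n x hx
      _ = p.factorial * (C * (1 - s)⁻¹) * (2 / B) ^ p * ((p / k) / c) ^ ((p : ℝ) / k) := by
          ring
      _ ≤ _ := factorial_mul_rpow_le hk hc (by positivity) (by have := sub_pos.2 hs1; positivity) p

theorem kSeq_image_under_APropOp_general (k τ ρ B C θ : ℝ) (hk : 0 < k)
    (T : (ℂ → ℂ) → ℂ → ℂ) (hTA : AProp k T τ ρ)
    (f : ℕ → ℂ → ℂ) (hB : 0 < B) (hBτ : B ≤ τ) (hC : 0 < C)
    (hθ : θ ∈ Set.Ioo (0 : ℝ) 1)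
    (hf : ∀ n : ℕ, 1 ≤ n → DifferentiableOn ℂ (f n) (tube k B n) ∧
      ∀ z ∈ tube k B n, ‖f n z‖ ≤ C * θ ^ n) :
    IsKSeq k (fun n => T (f n)) ∧
    ∃ F : ℝ → ℂ,
      TendstoUniformlyOn (fun N (x : ℝ) => ∑ n ∈ Finset.Icc 1 N, T (f n) (x : ℂ))
        F Filter.atTop (Set.Icc (-1) 1) ∧ GevreyClass k F := by
  obtain ⟨-, ⟨hρ, -⟩, hTk, -⟩ := hTA
  obtain ⟨N, hN⟩ := hTk B hB hBτ
  have hTf : IsKSeq k (fun n => T (f n)) :=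
    ⟨B * ((N : ℝ) + 2) ^ (-(1 : ℝ) / k), by positivity, ρ * C, by positivity, θ, hθ,
      hN.image_bound hk.le hB.le hρ.le hC.le hθ.1.le hf⟩
  exact ⟨hTf, hTf.exists_tendstoUniformlyOn_gevreyClass hk⟩

/-- if `T` is a linear operator with the `A(k)` property and
`(f_n)_{n≥1}` is a `k`-sequence whose parameter `B` does not exceed the
`k`-threshold `τ` of `T`, then `(T f_n)_{n≥1}` is again a `k`-sequence; in
particular the series `Σ (T f_n)|_{[-1,1]}` converges uniformly on `[-1,1]`
and its sum belongs to `G_k([-1,1])`. -/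
theorem kSeq_image_under_APropOp (k τ ρ B C θ : ℝ) (hk : 0 < k)
    (T : (ℂ → ℂ) → ℂ → ℂ) (hTlin : IsLinOp T) (hTA : AProp k T τ ρ)
    (f : ℕ → ℂ → ℂ) (hB : 0 < B) (hBτ : B ≤ τ) (hC : 0 < C)
    (hθ : θ ∈ Set.Ioo (0 : ℝ) 1)
    (hf : ∀ n : ℕ, 1 ≤ n → DifferentiableOn ℂ (f n) (tube k B n) ∧
      ∀ z ∈ tube k B n, ‖f n z‖ ≤ C * θ ^ n) :
    IsKSeq k (fun n => T (f n)) ∧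
    ∃ F : ℝ → ℂ,
      TendstoUniformlyOn (fun N (x : ℝ) => ∑ n ∈ Finset.Icc 1 N, T (f n) (x : ℂ))
        F Filter.atTop (Set.Icc (-1) 1) ∧ GevreyClass k F :=
  kSeq_image_under_APropOp_general k τ ρ B C θ hk T hTA f hB hBτ hC hθ hf
end
end

section
/- Let g be an entire function with g([-1,1]) ⊆ [-1,1] and λ(g) ≤ 1, and let (P_n)_{n≥1} be holomorphic functions on [-1,1]_σ (σ > 0) with P_n([-1,1]) ⊆ [-1,1] and λ(P_n) ≤ 1 for every n ≥ 1. Then the sequence (g ∘ P_n)_{n≥1} verifies the E(1) property; more precisely, for every A ∈ (0, min(1/2, σ)) and all integers p ≥ 1 and n ≥ 1 one has (g ∘ P_n)([-1,1]_{1,A,p+1}) ⊆ [-1,1]_{1,A,p}. -/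
open Metric Set Filter

noncomputable section

/-! A holomorphic self-map `f` of `[-1,1]` with `λ(f) ≤ 1` moves a point at distance `d < 1` from
`[-1,1]` to distance at most `d / (1 - d)`: expand `f` in its Taylor series at the nearest point of
the segment and compare with the geometric series. Applying this first to `P_n` and then to `g`
sends distance `A / (p + 1)` to at most `A / (p + 1 - 2A)`, which is `≤ A / p` as soon as
`A ≤ 1/2`. -/

open scoped Nat

lemma norm_sub_le_of_norm_iteratedDeriv_le {f : ℂ → ℂ} {x w : ℂ} {R : ℝ}
    (hf : DifferentiableOn ℂ f (ball x R)) (hw : w ∈ ball x R) (hw1 : ‖w - x‖ < 1)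
    (hderiv : ∀ m : ℕ, 1 ≤ m → ‖iteratedDeriv m f x‖ ≤ m !) :
    ‖f w - f x‖ ≤ ‖w - x‖ / (1 - ‖w - x‖) := by
  set d := ‖w - x‖
  set a : ℕ → ℂ := fun n => (n ! : ℂ)⁻¹ • (w - x) ^ n • iteratedDeriv n f x
  have htaylor : HasSum (fun n => a (n + 1)) (f w - f x) := by
    have := (hasSum_nat_add_iff' 1).mpr (Complex.hasSum_taylorSeries_on_ball hf hw)
    simpa [a] using this
  have hgeom : HasSum (fun n : ℕ => d ^ (n + 1)) (d / (1 - d)) := by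
    simpa [div_eq_mul_inv, pow_succ'] using
      (hasSum_geometric_of_lt_one (norm_nonneg _) hw1).mul_left d
  refine htaylor.norm_le_of_bounded hgeom fun n => ?_
  calc ‖a (n + 1)‖ = ((n + 1)! : ℝ)⁻¹ * (d ^ (n + 1) * ‖iteratedDeriv (n + 1) f x‖) := by
        simp only [a, norm_smul, norm_pow, norm_inv, Complex.norm_natCast, d]
    _ ≤ ((n + 1)! : ℝ)⁻¹ * (d ^ (n + 1) * (n + 1)!) := by
        gcongr
        exact hderiv (n + 1) n.succ_pos
    _ = d ^ (n + 1) := by field_simp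

lemma div_one_sub_lt_div_one_sub {s t : ℝ} (hst : s < t) (ht : t < 1) :
    s / (1 - s) < t / (1 - t) := by
  rw [div_lt_div_iff₀ (by linarith) (by linarith)]
  nlinarith

lemma infDist_apply_lt_div_one_sub {S : Set ℂ} (hS : IsCompact S) (hne : S.Nonempty)
    {f : ℂ → ℂ} {R : ℝ} (hf : DifferentiableOn ℂ f {z | infDist z S < R}) (hfS : MapsTo f S S)
    (hderiv : ∀ m : ℕ, 1 ≤ m → ∀ z ∈ S, ‖iteratedDeriv m f z‖ ≤ m !)
    {w : ℂ} {r : ℝ} (hr1 : r < 1) (hrR : r ≤ R) (hw : infDist w S < r) :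
    infDist (f w) S < r / (1 - r) := by
  obtain ⟨x, hx, hwx⟩ := hS.exists_infDist_eq_dist hne w
  rw [hwx, dist_eq_norm] at hw
  have hball : ball x R ⊆ {z | infDist z S < R} := fun z hz =>
    (infDist_le_dist_of_mem hx).trans_lt hz
  have hwball : w ∈ ball x R := by
    rw [mem_ball, dist_eq_norm]
    exact hw.trans_le hrR
  calc infDist (f w) S ≤ ‖f w - f x‖ := by
        rw [← dist_eq_norm]
        exact infDist_le_dist_of_mem (hfS hx)
    _ ≤ ‖w - x‖ / (1 - ‖w - x‖) :=
        norm_sub_le_of_norm_iteratedDeriv_le (hf.mono hball) hwball (hw.trans hr1)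
          fun m hm => hderiv m hm x hx
    _ < r / (1 - r) := div_one_sub_lt_div_one_sub hw hr1

lemma isCompact_seg : IsCompact seg :=
  isCompact_Icc.image Complex.continuous_ofReal

lemma seg_nonempty : seg.Nonempty := ⟨0, 0, by norm_num, by norm_num⟩

lemma tube_one (A : ℝ) (n : ℕ) : tube 1 A n = nbd (A / n) := by
  rw [tube, nbd, div_one, Real.rpow_neg_one, div_eq_mul_inv]

lemma div_div_one_sub_div {A c : ℝ} (hc : c ≠ 0) (hcA : c - A ≠ 0) :
    A / c / (1 - A / c) = A / (c - A) := by
  field_simp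

theorem comp_mapsTo_tube_one {σ A : ℝ} {g f : ℂ → ℂ} (hg : DifferentiableOn ℂ g (nbd 1))
    (hgseg : MapsTo g seg seg)
    (hglam : ∀ m : ℕ, 1 ≤ m → ∀ z ∈ seg, ‖iteratedDeriv m g z‖ ≤ m !)
    (hf : DifferentiableOn ℂ f (nbd σ)) (hfseg : MapsTo f seg seg)
    (hflam : ∀ m : ℕ, 1 ≤ m → ∀ z ∈ seg, ‖iteratedDeriv m f z‖ ≤ m !)
    (hA : 0 < A) (hA2 : A ≤ 1 / 2) (hAσ : A ≤ σ) {p : ℕ} (hp : 1 ≤ p) :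
    MapsTo (g ∘ f) (tube 1 A (p + 1)) (tube 1 A p) := by
  intro z hz
  rw [tube_one] at hz ⊢
  have hq : (1 : ℝ) ≤ p := by exact_mod_cast hp
  push_cast at hz
  have hfz : infDist (f z) seg < A / (p + 1 - A) := by
    rw [← div_div_one_sub_div (by linarith) (by linarith)]
    refine infDist_apply_lt_div_one_sub isCompact_seg seg_nonempty hf hfseg hflam ?_ ?_ hz
    · rw [div_lt_one (by linarith)]; linarith
    · exact (div_le_self hA.le (by linarith)).trans hAσ
  have hgfz : infDist (g (f z)) seg < A / (p + 1 - A - A) := by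
    rw [← div_div_one_sub_div (by linarith) (by linarith)]
    have hr : A / (p + 1 - A) < 1 := by rw [div_lt_one (by linarith)]; linarith
    exact infDist_apply_lt_div_one_sub isCompact_seg seg_nonempty hg hgseg hglam hr hr.le hfz
  exact hgfz.trans_le (div_le_div_of_nonneg_left hA.le (by linarith) (by linarith))

/-- if `g` is entire with `g([-1,1]) ⊆ [-1,1]`, `λ(g) ≤ 1`, and
`(P_n)` are holomorphic on `[-1,1]_σ` with `P_n([-1,1]) ⊆ [-1,1]`, `λ(P_n) ≤ 1`,
then `(g ∘ P_n)_{n≥1}` verifies the `E(1)` property; more precisely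
`(g ∘ P_n)([-1,1]_{1,A,p+1}) ⊆ [-1,1]_{1,A,p}` for `0 < A < min (1/2) σ`,
`p ≥ 1`, `n ≥ 1`. -/
theorem comp_E1 (σ : ℝ) (hσ : 0 < σ) (g : ℂ → ℂ) (hg : Differentiable ℂ g)
    (hgseg : ∀ z ∈ seg, g z ∈ seg)
    (hglam : ∀ n : ℕ, 1 ≤ n → ∀ z ∈ seg, ‖iteratedDeriv n g z‖ ≤ (n.factorial : ℝ))
    (P : ℕ → ℂ → ℂ)
    (hPd : ∀ n : ℕ, 1 ≤ n → DifferentiableOn ℂ (P n) (nbd σ))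
    (hPseg : ∀ n : ℕ, 1 ≤ n → ∀ z ∈ seg, P n z ∈ seg)
    (hPlam : ∀ n : ℕ, 1 ≤ n → ∀ m : ℕ, 1 ≤ m → ∀ z ∈ seg,
      ‖iteratedDeriv m (P n) z‖ ≤ (m.factorial : ℝ)) :
    EProp 1 σ (fun n : ℕ => g ∘ P (n + 1)) ∧
    ∀ A : ℝ, 0 < A → A < min (1 / 2) σ → ∀ p : ℕ, 1 ≤ p → ∀ n : ℕ, 1 ≤ n →
      ∀ z ∈ tube 1 A (p + 1), g (P n z) ∈ tube 1 A p := by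
  have hmaps : ∀ A, 0 < A → A ≤ min (1 / 2) σ → ∀ p, 1 ≤ p → ∀ n, 1 ≤ n →
      MapsTo (g ∘ P n) (tube 1 A (p + 1)) (tube 1 A p) := fun A hA hAτ p hp n hn =>
    comp_mapsTo_tube_one hg.differentiableOn hgseg hglam (hPd n hn) (hPseg n hn) (hPlam n hn)
      hA (hAτ.trans (min_le_left _ _)) (hAτ.trans (min_le_right _ _)) hp
  refine ⟨⟨min (1 / 2) σ, lt_min (by norm_num) hσ, min_le_right _ _, fun A hA hAτ => ?_⟩,
    fun A hA hAτ p hp n hn => hmaps A hA hAτ.le p hp n hn⟩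
  exact ⟨1, fun p hp n => hmaps A hA hAτ p hp (n + 1) n.succ_pos⟩
end
end
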